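/- Let (V, Q) be an FBAS with |V| = n and let i ∈ V be a node that belongs to no minimal quorum (i.e., i is not in the top tier T). Then the Shapley-Shubik power index of i is zero: φ_i = 0. Consequently, the reward distribution function d(i) = φ_i is freeloader-free. -/
import Mathlib


open scoped Classical

variable {α : Type*} [DecidableEq α]

/-- `(V, Q)` is an FBAS: `Q` assigns to each node `i ∈ V` a nonempty collection of
quorum slices, each slice being a subset of `V` containing `i` itself. -/
def IsFBAS (V : Finset α) (Q : α → Finset (Finset α)) : Prop :=
  ∀ i ∈ V, (Q i).Nonempty ∧ ∀ q ∈ Q i, i ∈ q ∧ q ⊆ V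

/-- A quorum is a nonempty `U ⊆ V` containing a slice of each of its members. -/
def IsQuorum (V : Finset α) (Q : α → Finset (Finset α)) (U : Finset α) : Prop :=
  U.Nonempty ∧ U ⊆ V ∧ ∀ i ∈ U, ∃ q ∈ Q i, q ⊆ U

/-- A minimal quorum is a quorum no proper subset of which is a quorum. -/
def IsMinimalQuorum (V : Finset α) (Q : α → Finset (Finset α)) (U : Finset α) : Prop :=
  IsQuorum V Q U ∧ ∀ U' ⊂ U, ¬ IsQuorum V Q U'

/-- A coalition `S` is winning iff it contains a quorum. -/
def ContainsQuorum (V : Finset α) (Q : α → Finset (Finset α)) (S : Finset α) : Prop :=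
  ∃ U, IsQuorum V Q U ∧ U ⊆ S

/-- Node `i` is critical for coalition `S` if `i ∈ S`, `S` contains a quorum,
but `S \ {i}` contains no quorum. -/
def Critical (V : Finset α) (Q : α → Finset (Finset α)) (i : α) (S : Finset α) : Prop :=
  i ∈ S ∧ ContainsQuorum V Q S ∧ ¬ ContainsQuorum V Q (S.erase i)

/-- The characteristic function of the FBAS game: `v S = 1` if `S` contains a quorum,
`0` otherwise. -/
noncomputable def charFunc (V : Finset α) (Q : α → Finset (Finset α)) (S : Finset α) : ℚ :=
  if ContainsQuorum V Q S then 1 else 0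

/-- The Shapley-Shubik power index of node `i`:
`φ_i = Σ_{S ∈ W^i} (|S| - 1)! (n - |S|)! / n!` with `n = |V|`. -/
noncomputable def sspi (V : Finset α) (Q : α → Finset (Finset α)) (i : α) : ℚ :=
  ∑ S ∈ V.powerset.filter (fun S => Critical V Q i S),
    (Nat.factorial (S.card - 1) * Nat.factorial (V.card - S.card) : ℚ) /
      Nat.factorial V.card

lemma exists_minimal_quorum_subset (V : Finset α) (Q : α → Finset (Finset α))
    (U : Finset α) (hU : IsQuorum V Q U) :
    ∃ M, IsMinimalQuorum V Q M ∧ M ⊆ U := by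
  induction U using Finset.strongInduction with
  | _ U ih =>
    by_cases hmin : ∀ U' ⊂ U, ¬ IsQuorum V Q U'
    · exact ⟨U, ⟨hU, hmin⟩, subset_rfl⟩
    · push_neg at hmin
      obtain ⟨U', hss, hq⟩ := hmin
      obtain ⟨M, hM, hMs⟩ := ih U' hss hq
      exact ⟨M, hM, hMs.trans hss.subset⟩

/-- a node belonging to no minimal quorum (i.e. outside the top tier)
has Shapley-Shubik power index zero, so the reward distribution `d(i) = φ_i`
is freeloader-free. -/
theorem sspi_eq_zero_of_not_mem_top_tier
    (V : Finset α) (Q : α → Finset (Finset α)) (hFBAS : IsFBAS V Q)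
    (i : α) (hi : i ∈ V)
    (h : ¬ ∃ U, IsMinimalQuorum V Q U ∧ i ∈ U) :
    sspi V Q i = 0 := by
  unfold sspi
  rw [Finset.sum_eq_zero]
  intro S hS
  exfalso
  rw [Finset.mem_filter] at hS
  obtain ⟨-, hiS, ⟨U, hUq, hUS⟩, hnot⟩ := hS
  obtain ⟨M, hM, hMU⟩ := exists_minimal_quorum_subset V Q U hUq
  apply hnot
  refine ⟨M, hM.1, fun x hx => Finset.mem_erase.mpr ⟨?_, hUS (hMU hx)⟩⟩
  rintro rfl
  exact h ⟨M, hM, hx⟩
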